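/- Let n ≥ 2 and let p = (p_1,…,p_n) and s = (s_1,…,s_n) be probability vectors with strictly positive entries. Define q_i(p) = p_i / Σ_{k=i}^{n} p_k and q_{¬i}(p) = (Σ_{k=i+1}^{n} p_k)/(Σ_{k=i}^{n} p_k), and similarly for s, and define the UniCon KL-Divergence UKD(p‖s) = Σ_{i=1}^{n−1} ((n−i+1)/n) · [ q_i(p)·log(q_i(p)/q_i(s)) + q_{¬i}(p)·log(q_{¬i}(p)/q_{¬i}(s)) ]. Then UKD(p‖s) ≥ 0, with equality if and only if p = s. -/

import Mathlib

/-!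
Each summand of `UKD(p‖s)` is a positive weight times the KL divergence between the binary
distributions `(q_i(p), q_{¬i}(p))` and `(q_i(s), q_{¬i}(s))`. Writing it as
`b · klFun (a / b) + (1 - b) · klFun ((1 - a) / (1 - b))` shows that it is nonnegative and vanishes
exactly when `q_i(p) = q_i(s)`. Since `q_i(p) = p_i / T_i(p)` and `T_{i+1}(p) = T_i(p) - p_i` for
the tail sums `T_i(p) = ∑_{k ≥ i} p_k`, equality of all `q_i` together with `T_1(p) = T_1(s)`
propagates to `T_i(p) = T_i(s)` for every `i`, and hence to `p = s`.
-/

open Finset Real InformationTheory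

noncomputable def binaryKL (a a' b b' : ℝ) : ℝ := a * log (a / b) + a' * log (a' / b')

lemma binaryKL_eq_klFun {a a' b b' : ℝ} (hb : b ≠ 0) (hb' : b' ≠ 0) (h : a + a' = b + b') :
    binaryKL a a' b b' = b * klFun (a / b) + b' * klFun (a' / b') := by
  simp only [binaryKL, klFun_apply]
  field_simp
  linear_combination h

lemma binaryKL_nonneg {a a' b b' : ℝ} (ha : 0 ≤ a) (ha' : 0 ≤ a') (hb : 0 < b) (hb' : 0 < b')
    (h : a + a' = b + b') : 0 ≤ binaryKL a a' b b' := by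
  rw [binaryKL_eq_klFun hb.ne' hb'.ne' h]
  have := klFun_nonneg (div_nonneg ha hb.le)
  have := klFun_nonneg (div_nonneg ha' hb'.le)
  positivity

lemma binaryKL_eq_zero_iff {a a' b b' : ℝ} (ha : 0 ≤ a) (ha' : 0 ≤ a') (hb : 0 < b) (hb' : 0 < b')
    (h : a + a' = b + b') : binaryKL a a' b b' = 0 ↔ a = b := by
  have hk := klFun_nonneg (div_nonneg ha hb.le)
  have hk' := klFun_nonneg (div_nonneg ha' hb'.le)
  rw [binaryKL_eq_klFun hb.ne' hb'.ne' h,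
    add_eq_zero_iff_of_nonneg (by positivity) (by positivity),
    mul_eq_zero_iff_left hb.ne', mul_eq_zero_iff_left hb'.ne',
    klFun_eq_zero_iff (div_nonneg ha hb.le), klFun_eq_zero_iff (div_nonneg ha' hb'.le),
    div_eq_one_iff_eq hb.ne', div_eq_one_iff_eq hb'.ne']
  exact ⟨And.left, fun hab => ⟨hab, by linarith⟩⟩

/-- The `i`-th term of the continuous-binary-classification decomposition: the binary KL divergence
between `(q_i(f), q_{¬i}(f))` and `(q_i(g), q_{¬i}(g))`. -/
noncomputable def stepKL (f g : ℕ → ℝ) (n i : ℕ) : ℝ :=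
  binaryKL (f i / ∑ k ∈ Icc i n, f k) ((∑ k ∈ Icc (i + 1) n, f k) / ∑ k ∈ Icc i n, f k)
    (g i / ∑ k ∈ Icc i n, g k) ((∑ k ∈ Icc (i + 1) n, g k) / ∑ k ∈ Icc i n, g k)

section

variable {f g : ℕ → ℝ} {m n i : ℕ}

lemma sum_Icc_eq_add_sum_Icc_succ (f : ℕ → ℝ) (h : i ≤ n) :
    ∑ k ∈ Icc i n, f k = f i + ∑ k ∈ Icc (i + 1) n, f k := by
  rw [Icc_add_one_left_eq_Ioc, add_sum_Ioc_eq_sum_Icc h]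

lemma sum_Icc_pos (hf : ∀ k ∈ Icc m n, 0 < f k) (hmi : m ≤ i) (hin : i ≤ n) :
    0 < ∑ k ∈ Icc i n, f k :=
  sum_pos (fun k hk => hf k (Icc_subset_Icc_left hmi hk)) (nonempty_Icc.2 hin)

lemma div_sum_Icc_add_div_sum_Icc_succ (h : i ≤ n) (hf : ∑ k ∈ Icc i n, f k ≠ 0) :
    f i / ∑ k ∈ Icc i n, f k + (∑ k ∈ Icc (i + 1) n, f k) / ∑ k ∈ Icc i n, f k = 1 := by
  rw [← add_div, ← sum_Icc_eq_add_sum_Icc_succ f h, div_self hf]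

lemma sum_Icc_eq_of_div_sum_Icc_eq (hf : ∀ i ∈ Ico m n, ∑ k ∈ Icc i n, f k ≠ 0)
    (htot : ∑ k ∈ Icc m n, f k = ∑ k ∈ Icc m n, g k)
    (hq : ∀ i ∈ Ico m n, f i / ∑ k ∈ Icc i n, f k = g i / ∑ k ∈ Icc i n, g k)
    (hmi : m ≤ i) (hin : i ≤ n) : ∑ k ∈ Icc i n, f k = ∑ k ∈ Icc i n, g k := by
  induction i, hmi using Nat.le_induction with
  | base => exact htot
  | succ i hmi ih =>
    have hi : i ∈ Ico m n := mem_Ico.2 ⟨hmi, by omega⟩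
    have hT := ih (by omega)
    have hfg : f i = g i := by
      have := hq i hi
      rwa [hT, div_left_inj' (hT ▸ hf i hi)] at this
    have hin' : i ≤ n := by omega
    linarith [sum_Icc_eq_add_sum_Icc_succ f hin', sum_Icc_eq_add_sum_Icc_succ g hin']

lemma forall_div_sum_Icc_eq_iff (hf : ∀ i ∈ Ico m n, ∑ k ∈ Icc i n, f k ≠ 0)
    (htot : ∑ k ∈ Icc m n, f k = ∑ k ∈ Icc m n, g k) :
    (∀ i ∈ Ico m n, f i / ∑ k ∈ Icc i n, f k = g i / ∑ k ∈ Icc i n, g k) ↔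
      ∀ i ∈ Icc m n, f i = g i := by
  constructor
  · intro hq i hi
    obtain ⟨hmi, hin⟩ := mem_Icc.1 hi
    have hT := sum_Icc_eq_of_div_sum_Icc_eq hf htot hq hmi hin
    obtain hin | rfl := hin.lt_or_eq
    · linarith [sum_Icc_eq_of_div_sum_Icc_eq hf htot hq (i := i + 1) (by omega) hin,
        sum_Icc_eq_add_sum_Icc_succ f hin.le, sum_Icc_eq_add_sum_Icc_succ g hin.le]
    · simpa using hT
  · intro hfg i hi
    have hsub : Icc i n ⊆ Icc m n := Icc_subset_Icc_left (mem_Ico.1 hi).1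
    rw [hfg i (Ico_subset_Icc_self hi), sum_congr rfl fun k hk => hfg k (hsub hk)]

lemma stepKL_nonneg_and_eq_zero_iff (hf : ∀ k ∈ Icc m n, 0 < f k) (hg : ∀ k ∈ Icc m n, 0 < g k)
    (hi : i ∈ Ico m n) :
    0 ≤ stepKL f g n i ∧
      (stepKL f g n i = 0 ↔ f i / ∑ k ∈ Icc i n, f k = g i / ∑ k ∈ Icc i n, g k) := by
  obtain ⟨hmi, hin⟩ := mem_Ico.1 hi
  have hFi := sum_Icc_pos hf hmi hin.le
  have hGi := sum_Icc_pos hg hmi hin.le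
  have hF : 0 ≤ (∑ k ∈ Icc (i + 1) n, f k) / ∑ k ∈ Icc i n, f k :=
    div_nonneg (sum_Icc_pos hf (by omega) hin).le hFi.le
  have hG : 0 < (∑ k ∈ Icc (i + 1) n, g k) / ∑ k ∈ Icc i n, g k :=
    div_pos (sum_Icc_pos hg (by omega) hin) hGi
  have hsum := (div_sum_Icc_add_div_sum_Icc_succ hin.le hFi.ne').trans
    (div_sum_Icc_add_div_sum_Icc_succ hin.le hGi.ne').symm
  have hf_i := div_nonneg (hf i (Ico_subset_Icc_self hi)).le hFi.le
  have hg_i := div_pos (hg i (Ico_subset_Icc_self hi)) hGi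
  exact ⟨binaryKL_nonneg hf_i hF hg_i hG hsum, binaryKL_eq_zero_iff hf_i hF hg_i hG hsum⟩

end

theorem unicon_kl_nonneg_eq_iff_general (n : ℕ) (p s : ℕ → ℝ)
    (hp : ∀ i ∈ Finset.Icc 1 n, 0 < p i)
    (hs : ∀ i ∈ Finset.Icc 1 n, 0 < s i)
    (hp1 : ∑ i ∈ Finset.Icc 1 n, p i = 1)
    (hs1 : ∑ i ∈ Finset.Icc 1 n, s i = 1) :
    0 ≤ ∑ i ∈ Finset.Icc 1 (n - 1),
        (((n : ℝ) - (i : ℝ) + 1) / (n : ℝ)) *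
          ((p i / ∑ k ∈ Finset.Icc i n, p k) *
              Real.log ((p i / ∑ k ∈ Finset.Icc i n, p k) /
                (s i / ∑ k ∈ Finset.Icc i n, s k)) +
            ((∑ k ∈ Finset.Icc (i + 1) n, p k) / ∑ k ∈ Finset.Icc i n, p k) *
              Real.log (((∑ k ∈ Finset.Icc (i + 1) n, p k) / ∑ k ∈ Finset.Icc i n, p k) /
                ((∑ k ∈ Finset.Icc (i + 1) n, s k) / ∑ k ∈ Finset.Icc i n, s k))) ∧
      ((∑ i ∈ Finset.Icc 1 (n - 1),
          (((n : ℝ) - (i : ℝ) + 1) / (n : ℝ)) *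
            ((p i / ∑ k ∈ Finset.Icc i n, p k) *
                Real.log ((p i / ∑ k ∈ Finset.Icc i n, p k) /
                  (s i / ∑ k ∈ Finset.Icc i n, s k)) +
              ((∑ k ∈ Finset.Icc (i + 1) n, p k) / ∑ k ∈ Finset.Icc i n, p k) *
                Real.log (((∑ k ∈ Finset.Icc (i + 1) n, p k) / ∑ k ∈ Finset.Icc i n, p k) /
                  ((∑ k ∈ Finset.Icc (i + 1) n, s k) / ∑ k ∈ Finset.Icc i n, s k)))) = 0 ↔
        ∀ i ∈ Finset.Icc 1 n, p i = s i) := by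
  change 0 ≤ ∑ i ∈ Icc 1 (n - 1), ((n : ℝ) - i + 1) / n * stepKL p s n i ∧
    (∑ i ∈ Icc 1 (n - 1), ((n : ℝ) - i + 1) / n * stepKL p s n i = 0 ↔ ∀ i ∈ Icc 1 n, p i = s i)
  rw [show Icc 1 (n - 1) = Ico 1 n by ext; simp only [mem_Icc, mem_Ico]; omega]
  have hw : ∀ i ∈ Ico 1 n, 0 < ((n : ℝ) - i + 1) / n := fun i hi => by
    have hin : (i : ℝ) < n := by exact_mod_cast (mem_Ico.1 hi).2
    have := i.cast_nonneg (α := ℝ)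
    exact div_pos (by linarith) (by linarith)
  have hstep i (hi : i ∈ Ico 1 n) := stepKL_nonneg_and_eq_zero_iff hp hs hi
  have hterm : ∀ i ∈ Ico 1 n, 0 ≤ ((n : ℝ) - i + 1) / n * stepKL p s n i :=
    fun i hi => mul_nonneg (hw i hi).le (hstep i hi).1
  refine ⟨sum_nonneg hterm, ?_⟩
  rw [sum_eq_zero_iff_of_nonneg hterm, ← forall_div_sum_Icc_eq_iff
    (fun i hi => (sum_Icc_pos hp (mem_Ico.1 hi).1 (mem_Ico.1 hi).2.le).ne') (hp1.trans hs1.symm)]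
  exact forall₂_congr fun i hi => (mul_eq_zero_iff_left (hw i hi).ne').trans (hstep i hi).2

/-- **Nonnegativity and identity of indiscernibles for the UniCon KL-Divergence.**
`UKD(p‖s) = ∑_{i=1}^{n-1} ((n−i+1)/n) · [q_i(p) log(q_i(p)/q_i(s)) + q_{¬i}(p) log(q_{¬i}(p)/q_{¬i}(s))]`
satisfies `UKD(p‖s) ≥ 0`, with equality iff `p = s`. -/
theorem unicon_kl_nonneg_eq_iff (n : ℕ) (hn : 2 ≤ n) (p s : ℕ → ℝ)
    (hp : ∀ i ∈ Finset.Icc 1 n, 0 < p i)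
    (hs : ∀ i ∈ Finset.Icc 1 n, 0 < s i)
    (hp1 : ∑ i ∈ Finset.Icc 1 n, p i = 1)
    (hs1 : ∑ i ∈ Finset.Icc 1 n, s i = 1) :
    0 ≤ ∑ i ∈ Finset.Icc 1 (n - 1),
        (((n : ℝ) - (i : ℝ) + 1) / (n : ℝ)) *
          ((p i / ∑ k ∈ Finset.Icc i n, p k) *
              Real.log ((p i / ∑ k ∈ Finset.Icc i n, p k) /
                (s i / ∑ k ∈ Finset.Icc i n, s k)) +
            ((∑ k ∈ Finset.Icc (i + 1) n, p k) / ∑ k ∈ Finset.Icc i n, p k) *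
              Real.log (((∑ k ∈ Finset.Icc (i + 1) n, p k) / ∑ k ∈ Finset.Icc i n, p k) /
                ((∑ k ∈ Finset.Icc (i + 1) n, s k) / ∑ k ∈ Finset.Icc i n, s k))) ∧
      ((∑ i ∈ Finset.Icc 1 (n - 1),
          (((n : ℝ) - (i : ℝ) + 1) / (n : ℝ)) *
            ((p i / ∑ k ∈ Finset.Icc i n, p k) *
                Real.log ((p i / ∑ k ∈ Finset.Icc i n, p k) /
                  (s i / ∑ k ∈ Finset.Icc i n, s k)) +
              ((∑ k ∈ Finset.Icc (i + 1) n, p k) / ∑ k ∈ Finset.Icc i n, p k) *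
                Real.log (((∑ k ∈ Finset.Icc (i + 1) n, p k) / ∑ k ∈ Finset.Icc i n, p k) /
                  ((∑ k ∈ Finset.Icc (i + 1) n, s k) / ∑ k ∈ Finset.Icc i n, s k)))) = 0 ↔
        ∀ i ∈ Finset.Icc 1 n, p i = s i) :=
  unicon_kl_nonneg_eq_iff_general n p s hp hs hp1 hs1
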